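/- Let G be a group generated by a finite symmetric set S, let d, w ∈ ℕ, and let A be a d×d matrix over ℂ[G] whose entries all have support contained in B_w. Let (F_n) be a Følner exhaustion of G such that dim V(F_n)/|F_n| → c ∈ ℝ. Then for all δ > 0 and ε with 0 < ε < 1 there exist L ∈ ℕ and δ' > 0 such that every nonempty finite subset Y ⊆ G with |Ω_L(Y)| > (1−δ')|Y| satisfies dim V(Y)/|Y| ≤ (1 − ε)⁻¹(c + δ) + ε. -/

import Mathlib

/-!
Fix a Følner set `F₀ ⊆ B_k` with `dim V(F₀) + d·|F₀ \ Ω_w(F₀)| < (c + δ)|F₀|`. For a finite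
`Y`, the dimension `r(T)` of the restriction of `V(Y)` to `T ⊆ Y` is monotone and submodular,
and the sets `F₀g ∩ Y`, `g ∈ F₀⁻¹Y`, cover every point of `Y` at least `|F₀|` times, so Shearer's
inequality gives `|F₀| dim V(Y) ≤ ∑_g r(F₀g ∩ Y)`. If `F₀g ⊆ Y`, the restriction of `f ∈ V(Y)` to
`F₀g` satisfies the equations of `V(F₀g)` on `Ω_w(F₀g)`, since `A` only looks `w` steps ahead;
by translation invariance this gives `r(F₀g) ≤ dim V(F₀) + d·|F₀ \ Ω_w(F₀)|`, and there are at
most `|Y|` such `g`. Every other `g` lies in `F₀⁻¹(Y \ Ω_{2k}(Y))`, a set of size at most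
`|F₀|·δ'|Y|`, and contributes at most `d|F₀|`. Altogether
`dim V(Y)/|Y| ≤ c + δ + d|F₀|δ'`, which is at most `c + δ + ε` for `δ' = ε/(d|F₀| + 1)`.
-/

open Pointwise Filter Topology

section Defs

variable {G : Type*} [Group G]

/-- The word ball of radius `k` with respect to the generating set `S`. -/
noncomputable def wball (S : Finset G) (k : ℕ) : Finset G :=
  letI := Classical.decEq G
  (insert (1 : G) S) ^ k

/-- The `k`-neighborhood `B_k(F) = B_k * F` of a finite set `F`. -/
noncomputable def wnbhd (S : Finset G) (k : ℕ) (F : Finset G) : Finset G :=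
  letI := Classical.decEq G
  wball S k * F

/-- The `k`-interior `Ω_k(F)` of a finite set `F`. -/
noncomputable def winter (S : Finset G) (k : ℕ) (F : Finset G) : Finset G :=
  letI := Classical.decEq G
  F.filter fun p => wball S k * {p} ⊆ F

/-- The boundary `∂F` of a finite set `F`. -/
noncomputable def wbdry (S : Finset G) (F : Finset G) : Finset G :=
  letI := Classical.decEq G
  F.filter fun p => ∃ s ∈ S, s * p ∉ F

/-- `S` is a finite symmetric generating set. -/
def IsSymmGen (S : Finset G) : Prop :=
  (∀ s ∈ S, s⁻¹ ∈ S) ∧ Subgroup.closure (S : Set G) = ⊤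

/-- A Følner exhaustion of `G`. -/
def IsFolnerExhaustion (S : Finset G) (F : ℕ → Finset G) : Prop :=
  (1 : G) ∈ F 0 ∧ Monotone F ∧ (∀ g : G, ∃ n, g ∈ F n) ∧
    Filter.Tendsto (fun n => ((wbdry S (F n)).card : ℝ) / ((F n).card : ℝ))
      Filter.atTop (nhds 0)

variable {d : ℕ}

/-- The space of vectors supported in `Fs` such that `A.mulVec f` vanishes on `Fv`. -/
noncomputable def kerOn (A : Matrix (Fin d) (Fin d) (MonoidAlgebra ℂ G))
    (Fs Fv : Finset G) : Submodule ℂ (Fin d → MonoidAlgebra ℂ G) where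
  carrier := {f | (∀ i, (f i).coeff.support ⊆ Fs) ∧ ∀ i, ∀ g ∈ Fv, (A.mulVec f i).coeff g = 0}
  zero_mem' := ⟨fun i => by simp, fun i g hg => by simp [Matrix.mulVec_zero]⟩
  add_mem' := by
    classical
    rintro f g ⟨hf1, hf2⟩ ⟨hg1, hg2⟩
    constructor
    · intro i
      exact (Finsupp.support_add (g₁ := (f i).coeff) (g₂ := (g i).coeff)).trans
        (Finset.union_subset (hf1 i) (hg1 i))
    · intro i x hx
      have h : A.mulVec (f + g) = A.mulVec f + A.mulVec g := Matrix.mulVec_add A f g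
      rw [h]
      show (A.mulVec f i + A.mulVec g i).coeff x = 0
      rw [MonoidAlgebra.coeff_add, Finsupp.add_apply, hf2 i x hx, hg2 i x hx, add_zero]
  smul_mem' := by
    classical
    rintro c f ⟨hf1, hf2⟩
    constructor
    · intro i
      exact (Finsupp.support_smul (b := c) (g := (f i).coeff)).trans (hf1 i)
    · intro i x hx
      have h : A.mulVec (c • f) = c • A.mulVec f := Matrix.mulVec_smul A c f
      rw [h]
      show (c • A.mulVec f i).coeff x = 0
      rw [MonoidAlgebra.coeff_smul, Finsupp.smul_apply, hf2 i x hx, smul_zero]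

/-- The space of vectors supported in `Fs` with `A.mulVec f = 0`. -/
noncomputable def kerAll (A : Matrix (Fin d) (Fin d) (MonoidAlgebra ℂ G))
    (Fs : Finset G) : Submodule ℂ (Fin d → MonoidAlgebra ℂ G) where
  carrier := {f | (∀ i, (f i).coeff.support ⊆ Fs) ∧ A.mulVec f = 0}
  zero_mem' := ⟨fun i => by simp, Matrix.mulVec_zero A⟩
  add_mem' := by
    classical
    rintro f g ⟨hf1, hf2⟩ ⟨hg1, hg2⟩
    exact ⟨fun i => (Finsupp.support_add (g₁ := (f i).coeff) (g₂ := (g i).coeff)).trans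
        (Finset.union_subset (hf1 i) (hg1 i)),
      by rw [Matrix.mulVec_add, hf2, hg2, add_zero]⟩
  smul_mem' := by
    classical
    rintro c f ⟨hf1, hf2⟩
    exact ⟨fun i => (Finsupp.support_smul (b := c) (g := (f i).coeff)).trans (hf1 i),
      by rw [Matrix.mulVec_smul, hf2, smul_zero]⟩

/-- `V(F)`. -/
noncomputable def VSpace (A : Matrix (Fin d) (Fin d) (MonoidAlgebra ℂ G)) (F : Finset G) :
    Submodule ℂ (Fin d → MonoidAlgebra ℂ G) :=
  kerOn A F F

/-- `Z(F)`. -/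
noncomputable def ZSpace (S : Finset G) (w : ℕ) (A : Matrix (Fin d) (Fin d) (MonoidAlgebra ℂ G))
    (F : Finset G) : Submodule ℂ (Fin d → MonoidAlgebra ℂ G) :=
  kerOn A (wnbhd S w F) F

/-- `W(F)`. -/
noncomputable def WSpace (S : Finset G) (w : ℕ) (A : Matrix (Fin d) (Fin d) (MonoidAlgebra ℂ G))
    (F : Finset G) : Submodule ℂ (Fin d → MonoidAlgebra ℂ G) :=
  kerAll A (winter S w F)

/-- `A.mulVec` as a `ℂ`-linear map. -/
noncomputable def mulVecL {R : Type*} [Ring R] [Algebra ℂ R] {d : ℕ}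
    (A : Matrix (Fin d) (Fin d) R) : (Fin d → R) →ₗ[ℂ] (Fin d → R) where
  toFun := A.mulVec
  map_add' := Matrix.mulVec_add A
  map_smul' c v := Matrix.mulVec_smul A c v

/-- Coordinatewise restriction to `F` (multiplication by the indicator of `F`). -/
noncomputable def restrictTo (d : ℕ) (F : Finset G) :
    (Fin d → MonoidAlgebra ℂ G) →ₗ[ℂ] (Fin d → MonoidAlgebra ℂ G) :=
  letI := Classical.decEq G
  { toFun := fun f i => MonoidAlgebra.ofCoeff ((f i).coeff.filter (· ∈ F))
    map_add' := fun f g => by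
      funext i
      exact congrArg MonoidAlgebra.ofCoeff Finsupp.filter_add
    map_smul' := fun c f => by
      funext i
      exact congrArg MonoidAlgebra.ofCoeff Finsupp.filter_smul }

end Defs

section Tiling

variable {ι α : Type*}

/-- An `ε`-disjoint family of finite sets. -/
def EpsDisjoint (I : Finset ι) (A : ι → Finset α) (ε : ℝ) : Prop :=
  ∃ Ab : ι → Finset α, (∀ i ∈ I, Ab i ⊆ A i) ∧
    (∀ i ∈ I, ((1 - ε) * (A i).card : ℝ) ≤ ((Ab i).card : ℝ)) ∧
    ∀ i ∈ I, ∀ j ∈ I, i ≠ j → Disjoint (Ab i) (Ab j)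

/-- The family `(A i)_{i ∈ I}` `a`-covers `X`. -/
def CoversFrac (I : Finset ι) (A : ι → Finset α) (X : Finset α) (a : ℝ) : Prop :=
  letI := Classical.decEq α
  (a * X.card : ℝ) ≤ ((X ∩ I.biUnion A).card : ℝ)

/-- The family `(A i)_{i ∈ I}` `δ`-evenly covers `X`. -/
def EvenCovering (I : Finset ι) (A : ι → Finset α) (X : Finset α) (δ : ℝ) : Prop :=
  letI := Classical.decEq α
  ∃ M : ℕ, 1 ≤ M ∧ (∀ p ∈ X, (I.filter fun i => p ∈ A i).card ≤ M) ∧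
    ((1 - δ) * M * X.card : ℝ) ≤ ∑ i ∈ I, ((A i).card : ℝ)

/-- The right translate `H·x`. -/
noncomputable def rtrans [Mul α] (H : Finset α) (x : α) : Finset α :=
  letI := Classical.decEq α
  H.image (· * x)

end Tiling

section Supp

variable {G : Type*} [Group G]

/-- Vectors all of whose coordinates are supported in `F`. -/
noncomputable def suppIn (d : ℕ) (F : Finset G) :
    Submodule ℂ (Fin d → MonoidAlgebra ℂ G) where
  carrier := {f | ∀ i, (f i).coeff.support ⊆ F}
  zero_mem' := fun i => by simp
  add_mem' := by
    classical
    intro f g hf hg i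
    exact (Finsupp.support_add (g₁ := (f i).coeff) (g₂ := (g i).coeff)).trans (Finset.union_subset (hf i) (hg i))
  smul_mem' := fun c f hf i => (Finsupp.support_smul (b := c) (g := (f i).coeff)).trans (hf i)

end Supp

open Finset Module

section WordBall

variable {G : Type*} [Group G] {S : Finset G}

lemma wball_eq [DecidableEq G] (S : Finset G) (k : ℕ) : wball S k = insert 1 S ^ k := by
  unfold wball
  congr!

lemma one_mem_wball (S : Finset G) (k : ℕ) : (1 : G) ∈ wball S k := by
  classical
  rw [wball_eq]
  exact one_mem_pow (mem_insert_self 1 S)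

lemma wball_mono (S : Finset G) {j k : ℕ} (h : j ≤ k) : wball S j ⊆ wball S k := by
  classical
  simp only [wball_eq]
  exact pow_subset_pow_right (mem_insert_self 1 S) h

lemma wball_add [DecidableEq G] (S : Finset G) (j k : ℕ) :
    wball S (j + k) = wball S j * wball S k := by
  simp only [wball_eq, pow_add]

lemma wball_one [DecidableEq G] (S : Finset G) : wball S 1 = insert 1 S := by
  rw [wball_eq, pow_one]

lemma inv_wball [DecidableEq G] (hS : ∀ s ∈ S, s⁻¹ ∈ S) (k : ℕ) : (wball S k)⁻¹ = wball S k := by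
  have hSinv : S⁻¹ = S := by
    ext s
    refine ⟨fun h => inv_inv s ▸ hS _ (mem_inv'.1 h), fun h => mem_inv'.2 (hS s h)⟩
  rw [wball_eq, ← inv_pow, inv_insert, inv_one, hSinv]

lemma inv_mem_wball (hS : ∀ s ∈ S, s⁻¹ ∈ S) {k : ℕ} {a : G} (ha : a ∈ wball S k) :
    a⁻¹ ∈ wball S k := by
  classical
  rw [← inv_wball hS k]
  exact inv_mem_inv ha

lemma exists_subset_wball (hS : IsSymmGen S) (F : Finset G) : ∃ k, F ⊆ wball S k := by
  classical
  have hball : ∀ g : G, ∃ k, g ∈ wball S k := by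
    intro g
    induction (hS.2 ▸ Subgroup.mem_top g : g ∈ Subgroup.closure (S : Set G))
      using Subgroup.closure_induction with
    | mem s hs => exact ⟨1, wball_one S ▸ mem_insert_of_mem hs⟩
    | one => exact ⟨0, one_mem_wball S 0⟩
    | mul x y _ _ hx hy =>
      obtain ⟨j, hj⟩ := hx
      obtain ⟨k, hk⟩ := hy
      exact ⟨j + k, wball_add S j k ▸ mul_mem_mul hj hk⟩
    | inv x _ hx =>
      obtain ⟨k, hk⟩ := hx
      exact ⟨k, inv_mem_wball hS.1 hk⟩
  choose r hr using hball
  exact ⟨F.sup r, fun g hg => wball_mono S (le_sup hg) (hr g)⟩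

end WordBall

section Interior

variable {G : Type*} [Group G] {S : Finset G}

lemma mem_winter {k : ℕ} {F : Finset G} {p : G} :
    p ∈ winter S k F ↔ p ∈ F ∧ ∀ q ∈ wball S k, q * p ∈ F := by
  unfold winter
  simp [subset_iff, Finset.mem_mul]

lemma winter_subset (k : ℕ) (F : Finset G) : winter S k F ⊆ F :=
  fun _ hp => (mem_winter.1 hp).1

lemma mem_wbdry {F : Finset G} {p : G} : p ∈ wbdry S F ↔ p ∈ F ∧ ∃ s ∈ S, s * p ∉ F := by
  unfold wbdry
  simp

lemma mem_wball_mul_wbdry_of_mul_notMem [DecidableEq G] (hS : ∀ s ∈ S, s⁻¹ ∈ S)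
    {F : Finset G} {k : ℕ} {p q : G} (hp : p ∈ F) (hq : q ∈ wball S k) (hqp : q * p ∉ F) :
    p ∈ wball S k * wbdry S F := by
  induction k generalizing p q with
  | zero =>
    rw [wball_eq, pow_zero, Finset.mem_one] at hq
    simp_all
  | succ k ih =>
    obtain ⟨q', hq', s, hs, rfl⟩ := Finset.mem_mul.1 (wball_add S k 1 ▸ hq)
    by_cases hsp : s * p ∈ F
    · obtain ⟨t, ht, b, hb, htb⟩ := Finset.mem_mul.1 (ih hsp hq' (by rwa [← mul_assoc]))
      refine Finset.mem_mul.2 ⟨s⁻¹ * t, ?_, b, hb, by rw [mul_assoc, htb, inv_mul_cancel_left]⟩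
      rw [add_comm, wball_add]
      exact mul_mem_mul (inv_mem_wball hS hs) ht
    · have hs1 : s ∈ S := by
        rw [wball_one, mem_insert] at hs
        exact hs.resolve_left fun h => hsp (h ▸ (one_mul p).symm ▸ hp)
      exact Finset.mem_mul.2 ⟨1, one_mem_wball S _, p, mem_wbdry.2 ⟨hp, s, hs1, hsp⟩, one_mul p⟩

lemma card_sdiff_winter_le [DecidableEq G] (hS : ∀ s ∈ S, s⁻¹ ∈ S) (k : ℕ) (F : Finset G) :
    #(F \ winter S k F) ≤ #(wball S k) * #(wbdry S F) := by
  refine (card_le_card fun p hp => ?_).trans card_mul_le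
  obtain ⟨hpF, hpΩ⟩ := mem_sdiff.1 hp
  have : ∃ q ∈ wball S k, q * p ∉ F := by
    by_contra! h
    exact hpΩ (mem_winter.2 ⟨hpF, h⟩)
  obtain ⟨q, hq, hqp⟩ := this
  exact mem_wball_mul_wbdry_of_mul_notMem hS hpF hq hqp

end Interior

section Translate

variable {G : Type*} [Group G] [DecidableEq G] {S : Finset G}

lemma mem_mul_singleton_iff {F : Finset G} {g p : G} : p ∈ F * {g} ↔ p * g⁻¹ ∈ F := by
  simp [Finset.mem_mul, ← eq_mul_inv_iff_mul_eq]

lemma mul_singleton_mul_singleton_inv (F : Finset G) (g : G) : F * {g} * {g⁻¹} = F := by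
  rw [mul_assoc, singleton_mul_singleton, mul_inv_cancel, singleton_one, mul_one]

lemma winter_mul_singleton (k : ℕ) (F : Finset G) (g : G) :
    winter S k (F * {g}) = winter S k F * {g} := by
  ext p
  simp only [mem_mul_singleton_iff, mem_winter, mul_assoc]

end Translate

section Supported

variable {G : Type*} {d : ℕ}

noncomputable def evalOn (d : ℕ) (E : Finset G) :
    (Fin d → MonoidAlgebra ℂ G) →ₗ[ℂ] (Fin d × E → ℂ) where
  toFun f ix := (f ix.1).coeff ix.2
  map_add' _ _ := rfl
  map_smul' _ _ := rfl

lemma ker_evalOn_domRestrict_suppIn (F : Finset G) :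
    LinearMap.ker ((evalOn d F).domRestrict (suppIn d F)) = ⊥ := by
  refine LinearMap.ker_eq_bot'.2 fun f hf => Subtype.ext <| funext fun i => ?_
  ext a
  by_cases ha : a ∈ F
  · exact congrFun hf (i, ⟨a, ha⟩)
  · exact Finsupp.notMem_support_iff.1 fun h => ha (f.2 i h)

instance (F : Finset G) : FiniteDimensional ℂ (suppIn d F) :=
  .of_injective _ (LinearMap.ker_eq_bot.1 (ker_evalOn_domRestrict_suppIn F))

lemma finrank_suppIn_le (F : Finset G) : finrank ℂ (suppIn d F) ≤ d * #F := by
  simpa using LinearMap.finrank_le_finrank_of_injective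
    (LinearMap.ker_eq_bot.1 (ker_evalOn_domRestrict_suppIn (d := d) F))

variable [Group G]

lemma kerOn_le_suppIn (A : Matrix (Fin d) (Fin d) (MonoidAlgebra ℂ G)) (Fs Fv : Finset G) :
    kerOn A Fs Fv ≤ suppIn d Fs :=
  fun _ hf => hf.1

instance (A : Matrix (Fin d) (Fin d) (MonoidAlgebra ℂ G)) (Fs Fv : Finset G) :
    FiniteDimensional ℂ (kerOn A Fs Fv) :=
  Submodule.finiteDimensional_of_le (kerOn_le_suppIn A Fs Fv)

instance (A : Matrix (Fin d) (Fin d) (MonoidAlgebra ℂ G)) (F : Finset G) :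
    FiniteDimensional ℂ (VSpace A F) :=
  inferInstanceAs (FiniteDimensional ℂ (kerOn A F F))

end Supported

section Restrict

variable {G : Type*} {d : ℕ}

lemma coeff_restrictTo_of_mem {F : Finset G} {a : G} (ha : a ∈ F)
    (f : Fin d → MonoidAlgebra ℂ G) (i : Fin d) :
    (restrictTo d F f i).coeff a = (f i).coeff a := by
  simp [restrictTo, ha]

lemma coeff_restrictTo_of_notMem {F : Finset G} {a : G} (ha : a ∉ F)
    (f : Fin d → MonoidAlgebra ℂ G) (i : Fin d) :
    (restrictTo d F f i).coeff a = 0 := by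
  simp [restrictTo, ha]

lemma restrictTo_mem_suppIn (F : Finset G) (f : Fin d → MonoidAlgebra ℂ G) :
    restrictTo d F f ∈ suppIn d F := fun i a ha => by
  by_contra h
  exact Finsupp.mem_support_iff.1 ha (coeff_restrictTo_of_notMem h f i)

lemma restrictTo_ext {F : Finset G} {f f' : Fin d → MonoidAlgebra ℂ G}
    (h : ∀ i, ∀ a ∈ F, (f i).coeff a = (f' i).coeff a) :
    restrictTo d F f = restrictTo d F f' := by
  funext i
  ext a
  by_cases ha : a ∈ F
  · simp only [coeff_restrictTo_of_mem ha, h i a ha]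
  · simp only [coeff_restrictTo_of_notMem ha]

lemma restrictTo_eq_zero_iff {F : Finset G} {f : Fin d → MonoidAlgebra ℂ G} :
    restrictTo d F f = 0 ↔ ∀ i, ∀ a ∈ F, (f i).coeff a = 0 := by
  refine ⟨fun h i a ha => ?_, fun h => ?_⟩
  · rw [← coeff_restrictTo_of_mem ha, h]
    rfl
  · rw [← (restrictTo d F).map_zero]
    exact restrictTo_ext h

lemma restrictTo_of_mem_suppIn {F : Finset G} {f : Fin d → MonoidAlgebra ℂ G}
    (hf : f ∈ suppIn d F) : restrictTo d F f = f := by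
  funext i
  ext a
  by_cases ha : a ∈ F
  · rw [coeff_restrictTo_of_mem ha]
  · rw [coeff_restrictTo_of_notMem ha, Finsupp.notMem_support_iff.1 fun h => ha (hf i h)]

lemma restrictTo_restrictTo_of_subset {T T' : Finset G} (h : T ⊆ T')
    (f : Fin d → MonoidAlgebra ℂ G) :
    restrictTo d T (restrictTo d T' f) = restrictTo d T f :=
  restrictTo_ext fun i _ ha => coeff_restrictTo_of_mem (h ha) f i

end Restrict

section RestrictRank

variable {G : Type*} {d : ℕ}

noncomputable def restrictRank (V : Submodule ℂ (Fin d → MonoidAlgebra ℂ G)) (T : Finset G) : ℕ :=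
  finrank ℂ (V.map (restrictTo d T))

variable (V : Submodule ℂ (Fin d → MonoidAlgebra ℂ G))

lemma restrictRank_empty : restrictRank V ∅ = 0 := by
  have : restrictTo d (∅ : Finset G) = 0 :=
    LinearMap.ext fun _ => restrictTo_eq_zero_iff.2 fun _ _ ha => absurd ha (notMem_empty _)
  rw [restrictRank, this, Submodule.map_zero, finrank_bot]

lemma restrictRank_le_card (T : Finset G) : restrictRank V T ≤ d * #T := by
  refine (Submodule.finrank_mono ?_).trans (finrank_suppIn_le T)
  rintro _ ⟨f, -, rfl⟩
  exact restrictTo_mem_suppIn T f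

lemma restrictRank_of_le_suppIn {Y : Finset G} (hV : V ≤ suppIn d Y) :
    restrictRank V Y = finrank ℂ V := by
  have : V.map (restrictTo d Y) = V := by
    ext f
    refine ⟨?_, fun hf => ⟨f, hf, restrictTo_of_mem_suppIn (hV hf)⟩⟩
    rintro ⟨f, hf, rfl⟩
    rwa [restrictTo_of_mem_suppIn (hV hf)]
  rw [restrictRank, this]

lemma mem_ker_restrictTo_domRestrict {T : Finset G} {f : V} :
    f ∈ LinearMap.ker ((restrictTo d T).domRestrict V) ↔ ∀ i, ∀ a ∈ T, (f.1 i).coeff a = 0 :=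
  restrictTo_eq_zero_iff

variable [FiniteDimensional ℂ V]

lemma restrictRank_mono : Monotone (restrictRank V) := by
  intro T T' h
  have : V.map (restrictTo d T) = (V.map (restrictTo d T')).map (restrictTo d T) := by
    rw [← Submodule.map_comp]
    exact congrArg (V.map ·) (LinearMap.ext (restrictTo_restrictTo_of_subset h)).symm
  rw [restrictRank, restrictRank, this]
  exact Submodule.finrank_map_le _ _

lemma restrictRank_add_finrank_ker (T : Finset G) :
    restrictRank V T + finrank ℂ (LinearMap.ker ((restrictTo d T).domRestrict V)) =
      finrank ℂ V := by
  rw [restrictRank, ← LinearMap.range_domRestrict]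
  exact LinearMap.finrank_range_add_finrank_ker _

lemma restrictRank_union_add_inter_le [DecidableEq G] (T T' : Finset G) :
    restrictRank V (T ∪ T') + restrictRank V (T ∩ T') ≤ restrictRank V T + restrictRank V T' := by
  let K := fun T : Finset G => LinearMap.ker ((restrictTo d T).domRestrict V)
  have hK_anti : ∀ {T T' : Finset G}, T ⊆ T' → K T' ≤ K T := fun h f hf => by
    simp only [K, mem_ker_restrictTo_domRestrict] at hf ⊢
    exact fun i a ha => hf i a (h ha)
  have h_union : K (T ∪ T') = K T ⊓ K T' := by
    refine le_antisymm (le_inf (hK_anti subset_union_left) (hK_anti subset_union_right)) ?_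
    rintro f ⟨hT, hT'⟩
    simp only [K, SetLike.mem_coe, mem_ker_restrictTo_domRestrict] at hT hT' ⊢
    intro i a ha
    rcases mem_union.1 ha with ha | ha
    exacts [hT i a ha, hT' i a ha]
  have h_inter : K T ⊔ K T' ≤ K (T ∩ T') :=
    sup_le (hK_anti inter_subset_left) (hK_anti inter_subset_right)
  have h_union_rank : restrictRank V (T ∪ T') + finrank ℂ ↥(K T ⊓ K T') = finrank ℂ V :=
    h_union ▸ restrictRank_add_finrank_ker V (T ∪ T')
  have := Submodule.finrank_sup_add_finrank_inf_eq (K T) (K T')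
  have := Submodule.finrank_mono h_inter
  have hT : restrictRank V T + finrank ℂ (K T) = finrank ℂ V := restrictRank_add_finrank_ker V T
  have hT' : restrictRank V T' + finrank ℂ (K T') = finrank ℂ V :=
    restrictRank_add_finrank_ker V T'
  have h_inter_rank : restrictRank V (T ∩ T') + finrank ℂ (K (T ∩ T')) = finrank ℂ V :=
    restrictRank_add_finrank_ker V (T ∩ T')
  omega

end RestrictRank

theorem mul_le_sum_of_submodular {α ι : Type*} [DecidableEq α] (r : Finset α → ℕ)
    (h_empty : r ∅ = 0) (h_mono : Monotone r)
    (h_sub : ∀ s t, r (s ∪ t) + r (s ∩ t) ≤ r s + r t)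
    {Y : Finset α} {I : Finset ι} {T : ι → Finset α} {M : ℕ} (hT : ∀ i ∈ I, T i ⊆ Y)
    (hM : ∀ p ∈ Y, M ≤ #{i ∈ I | p ∈ T i}) :
    M * r Y ≤ ∑ i ∈ I, r (T i) := by
  induction Y using Finset.induction_on generalizing T with
  | empty => simp [h_empty]
  | @insert p Y hp ih =>
    obtain ⟨Δ, hΔ⟩ := Nat.exists_eq_add_of_le (h_mono (subset_insert p Y))
    have h_erase : M * r Y ≤ ∑ i ∈ I, r ((T i).erase p) := by
      refine ih (fun i hi => subset_insert_iff.1 (hT i hi)) fun q hq => ?_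
      have hqp : q ≠ p := fun h => hp (h ▸ hq)
      simpa [mem_erase, hqp] using hM q (mem_insert_of_mem hq)
    -- by submodularity, a set `T i` containing `p` gains at least `Δ = r (insert p Y) - r Y`
    have h_gain : ∀ i ∈ I, r ((T i).erase p) + (if p ∈ T i then Δ else 0) ≤ r (T i) := by
      intro i hi
      split_ifs with hpT
      · have h_union : T i ∪ Y = insert p Y := by
          rw [← insert_erase hpT, insert_union, union_eq_right.2 (subset_insert_iff.1 (hT i hi))]
        have h_inter : T i ∩ Y = (T i).erase p := by
          rw [← insert_erase hpT, insert_inter_of_notMem hp,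
            inter_eq_left.2 (subset_insert_iff.1 (hT i hi)), erase_insert (notMem_erase p _)]
        have := h_sub (T i) Y
        rw [h_union, h_inter, hΔ] at this
        omega
      · simp [erase_eq_of_notMem hpT]
    have h_sum := sum_le_sum h_gain
    rw [sum_add_distrib, ← sum_filter, sum_const, smul_eq_mul] at h_sum
    calc M * r (insert p Y) = M * r Y + M * Δ := by rw [hΔ, mul_add]
      _ ≤ ∑ i ∈ I, r ((T i).erase p) + #{i ∈ I | p ∈ T i} * Δ :=
        add_le_add h_erase (Nat.mul_le_mul_right Δ (hM p (mem_insert_self p Y)))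
      _ ≤ ∑ i ∈ I, r (T i) := h_sum

section Operator

open scoped Matrix

variable {G : Type*} [Group G] {d : ℕ} (A : Matrix (Fin d) (Fin d) (MonoidAlgebra ℂ G))

lemma coeff_mulVec_restrictTo {B T : Finset G} (hA : ∀ i j, (A i j).coeff.support ⊆ B) {p : G}
    (hp : ∀ s ∈ B, s⁻¹ * p ∈ T) (f : Fin d → MonoidAlgebra ℂ G) (i : Fin d) :
    ((A *ᵥ restrictTo d T f) i).coeff p = ((A *ᵥ f) i).coeff p := by
  simp only [Matrix.mulVec, dotProduct, MonoidAlgebra.coeff_sum, Finsupp.finsetSum_apply]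
  refine sum_congr rfl fun j _ => ?_
  rw [MonoidAlgebra.coeff_mul_apply_left, MonoidAlgebra.coeff_mul_apply_left]
  exact Finsupp.sum_congr fun s hs => by rw [coeff_restrictTo_of_mem (hp s (hA i j hs))]

lemma finrank_kerOn_le_finrank_kerOn_add [DecidableEq G] {Fs Fv Fv' : Finset G} (h : Fv ⊆ Fv') :
    finrank ℂ (kerOn A Fs Fv) ≤ finrank ℂ (kerOn A Fs Fv') + d * #(Fv' \ Fv) := by
  let θ := (restrictTo d (Fv' \ Fv) ∘ₗ mulVecL A).domRestrict (kerOn A Fs Fv)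
  have h_range : finrank ℂ (LinearMap.range θ) ≤ d * #(Fv' \ Fv) := by
    refine (Submodule.finrank_mono ?_).trans (finrank_suppIn_le _)
    rintro _ ⟨f, rfl⟩
    exact restrictTo_mem_suppIn _ _
  have h_le : kerOn A Fs Fv' ≤ kerOn A Fs Fv := fun f hf => ⟨hf.1, fun i p hp => hf.2 i p (h hp)⟩
  have h_ker : LinearMap.ker θ = (kerOn A Fs Fv').comap (kerOn A Fs Fv).subtype := by
    ext f
    change restrictTo d (Fv' \ Fv) (A *ᵥ f.1) = 0 ↔ f.1 ∈ kerOn A Fs Fv'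
    rw [restrictTo_eq_zero_iff]
    refine ⟨fun hf => ⟨f.2.1, fun i p hp => ?_⟩, fun hf i p hp => hf.2 i p (mem_sdiff.1 hp).1⟩
    by_cases hpv : p ∈ Fv
    · exact f.2.2 i p hpv
    · exact hf i p (mem_sdiff.2 ⟨hp, hpv⟩)
  have := LinearMap.finrank_range_add_finrank_ker θ
  rw [h_ker, (Submodule.comapSubtypeEquivOfLe h_le).finrank_eq] at this
  omega

noncomputable def rightTranslate (d : ℕ) (g : G) :
    (Fin d → MonoidAlgebra ℂ G) ≃ₗ[ℂ] (Fin d → MonoidAlgebra ℂ G) :=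
  LinearEquiv.piCongrRight fun _ =>
    (Units.map (MonoidAlgebra.of ℂ G) (toUnits g)).mulRightLinearEquiv ℂ

lemma coeff_rightTranslate (g : G) (f : Fin d → MonoidAlgebra ℂ G) (i : Fin d) (p : G) :
    (rightTranslate d g f i).coeff p = (f i).coeff (p * g⁻¹) := by
  simp [rightTranslate, MonoidAlgebra.coeff_mul_single_apply]

lemma mulVec_rightTranslate (g : G) (f : Fin d → MonoidAlgebra ℂ G) :
    A *ᵥ rightTranslate d g f = rightTranslate d g (A *ᵥ f) := by
  funext i
  simp [rightTranslate, Matrix.mulVec, dotProduct, mul_assoc]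

variable [DecidableEq G]

lemma map_rightTranslate_kerOn_le (Fs Fv : Finset G) (g : G) :
    (kerOn A Fs Fv).map (rightTranslate d g).toLinearMap ≤ kerOn A (Fs * {g}) (Fv * {g}) := by
  rintro _ ⟨f, hf, rfl⟩
  refine ⟨fun i p hp => ?_, fun i p hp => ?_⟩
  · rw [Finsupp.mem_support_iff, LinearEquiv.coe_coe, coeff_rightTranslate] at hp
    exact mem_mul_singleton_iff.2 (hf.1 i (Finsupp.mem_support_iff.2 hp))
  · rw [LinearEquiv.coe_coe, mulVec_rightTranslate, coeff_rightTranslate]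
    exact hf.2 i _ (mem_mul_singleton_iff.1 hp)

lemma finrank_kerOn_mul_singleton (Fs Fv : Finset G) (g : G) :
    finrank ℂ (kerOn A (Fs * {g}) (Fv * {g})) = finrank ℂ (kerOn A Fs Fv) := by
  have key : ∀ (Fs Fv : Finset G) (g : G),
      finrank ℂ (kerOn A Fs Fv) ≤ finrank ℂ (kerOn A (Fs * {g}) (Fv * {g})) := fun Fs Fv g =>
    (LinearEquiv.finrank_map_eq (rightTranslate d g) _).symm.le.trans
      (Submodule.finrank_mono (map_rightTranslate_kerOn_le A Fs Fv g))
  refine le_antisymm ?_ (key Fs Fv g)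
  have := key (Fs * {g}) (Fv * {g}) g⁻¹
  rwa [mul_singleton_mul_singleton_inv, mul_singleton_mul_singleton_inv] at this

end Operator

section Counting

variable {G : Type*} [Group G] {S : Finset G} {d w : ℕ}
  {A : Matrix (Fin d) (Fin d) (MonoidAlgebra ℂ G)}

lemma map_restrictTo_VSpace_le_kerOn (hS : ∀ s ∈ S, s⁻¹ ∈ S)
    (hA : ∀ i j, (A i j).coeff.support ⊆ wball S w) {F Y : Finset G} (hFY : F ⊆ Y) :
    (VSpace A Y).map (restrictTo d F) ≤ kerOn A F (winter S w F) := by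
  rintro _ ⟨f, hf, rfl⟩
  refine ⟨restrictTo_mem_suppIn F f, fun i p hp => ?_⟩
  have hp' := mem_winter.1 hp
  rw [coeff_mulVec_restrictTo A hA fun s hs => hp'.2 _ (inv_mem_wball hS hs)]
  exact hf.2 i p (hFY hp'.1)

variable [DecidableEq G]

lemma restrictRank_VSpace_mul_singleton_le (hS : ∀ s ∈ S, s⁻¹ ∈ S)
    (hA : ∀ i j, (A i j).coeff.support ⊆ wball S w) {F Y : Finset G} {g : G}
    (hFY : F * {g} ⊆ Y) :
    restrictRank (VSpace A Y) (F * {g}) ≤ finrank ℂ (VSpace A F) + d * #(F \ winter S w F) :=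
  calc restrictRank (VSpace A Y) (F * {g})
      ≤ finrank ℂ (kerOn A (F * {g}) (winter S w (F * {g}))) :=
        Submodule.finrank_mono (map_restrictTo_VSpace_le_kerOn hS hA hFY)
    _ = finrank ℂ (kerOn A F (winter S w F)) := by
        rw [winter_mul_singleton, finrank_kerOn_mul_singleton]
    _ ≤ finrank ℂ (VSpace A F) + d * #(F \ winter S w F) :=
        finrank_kerOn_le_finrank_kerOn_add A (winter_subset w F)

lemma card_le_card_filter_mem_mul_singleton (F : Finset G) {Y : Finset G} {p : G} (hp : p ∈ Y) :
    #F ≤ #{g ∈ F⁻¹ * Y | p ∈ F * {g} ∩ Y} := by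
  refine card_le_card_of_injOn (fun f => f⁻¹ * p) (fun f hf => ?_) fun f _ f' _ h => ?_
  · refine mem_filter.2 ⟨mul_mem_mul (inv_mem_inv hf) hp, mem_inter.2 ⟨?_, hp⟩⟩
    rw [mem_mul_singleton_iff, mul_inv_rev, inv_inv, mul_inv_cancel_left]
    exact hf
  · simpa using h

lemma card_filter_mul_singleton_subset_le {F : Finset G} (hF : F.Nonempty) (I Y : Finset G) :
    #{g ∈ I | F * {g} ⊆ Y} ≤ #Y := by
  obtain ⟨f, hf⟩ := hF
  exact card_le_card_of_injOn (f * ·)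
    (fun g hg => (mem_filter.1 hg).2 (mul_mem_mul hf (mem_singleton_self g)))
    (mul_right_injective f).injOn

lemma filter_not_mul_singleton_subset_subset (hS : ∀ s ∈ S, s⁻¹ ∈ S) {F : Finset G} {k : ℕ}
    (hk : F ⊆ wball S k) (Y : Finset G) :
    {g ∈ F⁻¹ * Y | ¬F * {g} ⊆ Y} ⊆ F⁻¹ * (Y \ winter S (k + k) Y) := by
  intro g hg
  obtain ⟨hgI, hgY⟩ := mem_filter.1 hg
  obtain ⟨f', hf', p, hp, rfl⟩ := Finset.mem_mul.1 hgI
  refine mul_mem_mul hf' (mem_sdiff.2 ⟨hp, fun hpΩ => hgY fun x hx => ?_⟩)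
  obtain ⟨f, hf, y, hy, rfl⟩ := Finset.mem_mul.1 hx
  rw [mem_singleton] at hy
  subst hy
  have hf'k : f' ∈ wball S k := inv_inv f' ▸ inv_mem_wball hS (hk (mem_inv'.1 hf'))
  rw [← mul_assoc]
  exact (mem_winter.1 hpΩ).2 _ (wball_add S k k ▸ mul_mem_mul (hk hf) hf'k)

lemma card_inv_mul_le (F X : Finset G) : #(F⁻¹ * X) ≤ #F * #X :=
  card_mul_le.trans_eq (by rw [card_inv])

theorem card_mul_finrank_VSpace_le (hS : ∀ s ∈ S, s⁻¹ ∈ S)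
    (hA : ∀ i j, (A i j).coeff.support ⊆ wball S w) {F : Finset G} (hF : F.Nonempty) {k : ℕ}
    (hk : F ⊆ wball S k) (Y : Finset G) :
    #F * finrank ℂ (VSpace A Y) ≤
      #Y * (finrank ℂ (VSpace A F) + d * #(F \ winter S w F)) +
        #F * #(Y \ winter S (k + k) Y) * (d * #F) := by
  set r := restrictRank (VSpace A Y)
  set I := F⁻¹ * Y
  set a := finrank ℂ (VSpace A F) + d * #(F \ winter S w F)
  have h_shearer : #F * r Y ≤ ∑ g ∈ I, r (F * {g} ∩ Y) :=
    mul_le_sum_of_submodular r (restrictRank_empty _) (restrictRank_mono _)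
      (restrictRank_union_add_inter_le _) (fun _ _ => inter_subset_right)
      fun _ hp => card_le_card_filter_mem_mul_singleton F hp
  have h_full : r Y = finrank ℂ (VSpace A Y) :=
    restrictRank_of_le_suppIn _ (kerOn_le_suppIn A Y Y)
  rw [h_full] at h_shearer
  have h_good : ∀ g ∈ {g ∈ I | F * {g} ⊆ Y}, r (F * {g} ∩ Y) ≤ a := fun g hg => by
    rw [inter_eq_left.2 (mem_filter.1 hg).2]
    exact restrictRank_VSpace_mul_singleton_le hS hA (mem_filter.1 hg).2
  have h_bad : ∀ g ∈ {g ∈ I | ¬F * {g} ⊆ Y}, r (F * {g} ∩ Y) ≤ d * #F := fun g _ =>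
    (restrictRank_le_card _ _).trans <| Nat.mul_le_mul_left d <|
      (card_le_card inter_subset_left).trans_eq (card_mul_singleton F g)
  have h_bad_card : #{g ∈ I | ¬F * {g} ⊆ Y} ≤ #F * #(Y \ winter S (k + k) Y) :=
    (card_le_card (filter_not_mul_singleton_subset_subset hS hk Y)).trans (card_inv_mul_le _ _)
  calc #F * finrank ℂ (VSpace A Y)
      ≤ ∑ g ∈ {g ∈ I | F * {g} ⊆ Y}, r (F * {g} ∩ Y) +
          ∑ g ∈ {g ∈ I | ¬F * {g} ⊆ Y}, r (F * {g} ∩ Y) := by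
        rwa [sum_filter_add_sum_filter_not]
    _ ≤ #{g ∈ I | F * {g} ⊆ Y} * a + #{g ∈ I | ¬F * {g} ⊆ Y} * (d * #F) := by
        simpa only [smul_eq_mul] using add_le_add (sum_le_card_nsmul _ _ _ h_good)
          (sum_le_card_nsmul _ _ _ h_bad)
    _ ≤ #Y * a + #F * #(Y \ winter S (k + k) Y) * (d * #F) :=
        add_le_add (Nat.mul_le_mul_right a (card_filter_mul_singleton_subset_le hF I Y))
          (Nat.mul_le_mul_right _ h_bad_card)

end Counting

lemma exists_finrank_VSpace_add_lt {G : Type*} [Group G] [DecidableEq G] {S : Finset G}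
    (hS : ∀ s ∈ S, s⁻¹ ∈ S) {d : ℕ} (A : Matrix (Fin d) (Fin d) (MonoidAlgebra ℂ G)) (w : ℕ)
    {F : ℕ → Finset G} (hF : IsFolnerExhaustion S F) {c δ : ℝ}
    (hc : Tendsto (fun n => (finrank ℂ (VSpace A (F n)) : ℝ) / #(F n)) atTop (𝓝 c))
    (hδ : 0 < δ) :
    ∃ F₀ : Finset G, F₀.Nonempty ∧
      ((finrank ℂ (VSpace A F₀) + d * #(F₀ \ winter S w F₀) : ℕ) : ℝ) < (c + δ) * #F₀ := by
  obtain ⟨h_one, h_mono, -, h_bdry⟩ := hF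
  set K : ℝ := d * #(wball S w)
  have hβ : 0 < δ / (2 * (K + 1)) := by positivity
  have hKβ : K * (δ / (2 * (K + 1))) ≤ δ / 2 := by
    rw [mul_div_assoc', div_le_div_iff₀ (by positivity) two_pos]
    nlinarith
  obtain ⟨n, hn_dim, hn_bdry⟩ := ((hc.eventually (gt_mem_nhds (by linarith : c < c + δ / 2))).and
    (h_bdry.eventually (gt_mem_nhds hβ))).exists
  have hne : (F n).Nonempty := ⟨1, h_mono (Nat.zero_le n) h_one⟩
  have hcard : (0 : ℝ) < #(F n) := by exact_mod_cast hne.card_pos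
  rw [div_lt_iff₀ hcard] at hn_dim hn_bdry
  have h_int : (d * #(F n \ winter S w (F n)) : ℝ) ≤ K * #(wbdry S (F n)) := by
    rw [mul_assoc]
    exact_mod_cast Nat.mul_le_mul_left d (card_sdiff_winter_le hS w (F n))
  refine ⟨F n, hne, ?_⟩
  push_cast
  calc (finrank ℂ (VSpace A (F n)) : ℝ) + d * #(F n \ winter S w (F n))
      < (c + δ / 2) * #(F n) + K * (δ / (2 * (K + 1)) * #(F n)) :=
        add_lt_add_of_lt_of_le hn_dim
          (h_int.trans (mul_le_mul_of_nonneg_left hn_bdry.le (by positivity)))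
    _ ≤ (c + δ) * #(F n) := by nlinarith

theorem finrank_VSpace_le {G : Type*} [Group G] [DecidableEq G] {S : Finset G}
    (hS : ∀ s ∈ S, s⁻¹ ∈ S) {d w : ℕ} {A : Matrix (Fin d) (Fin d) (MonoidAlgebra ℂ G)}
    (hA : ∀ i j, (A i j).coeff.support ⊆ wball S w) {F : Finset G} (hF : F.Nonempty) {k : ℕ}
    (hk : F ⊆ wball S k) {Y : Finset G} {a η : ℝ}
    (ha : ((finrank ℂ (VSpace A F) + d * #(F \ winter S w F) : ℕ) : ℝ) ≤ a * #F)
    (hη : (#(Y \ winter S (k + k) Y) : ℝ) ≤ η * #Y) :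
    (finrank ℂ (VSpace A Y) : ℝ) ≤ (a + d * #F * η) * #Y := by
  have hF_pos : (0 : ℝ) < #F := by exact_mod_cast hF.card_pos
  refine le_of_mul_le_mul_left ?_ hF_pos
  calc (#F : ℝ) * finrank ℂ (VSpace A Y)
      ≤ #Y * ((finrank ℂ (VSpace A F) + d * #(F \ winter S w F) : ℕ) : ℝ) +
          #F * #(Y \ winter S (k + k) Y) * (d * #F) := by
        exact_mod_cast card_mul_finrank_VSpace_le hS hA hF hk Y
    _ ≤ #Y * (a * #F) + #F * (η * #Y) * (d * #F) := by gcongr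
    _ = #F * ((a + d * #F * η) * #Y) := by ring

theorem dim_upper_bound {G : Type*} [Group G] (S : Finset G) (hS : IsSymmGen S)
    (d w : ℕ) (A : Matrix (Fin d) (Fin d) (MonoidAlgebra ℂ G))
    (hA : ∀ i j, (A i j).coeff.support ⊆ wball S w)
    (F : ℕ → Finset G) (hF : IsFolnerExhaustion S F) (c : ℝ)
    (hc : Tendsto (fun n => (Module.finrank ℂ (VSpace A (F n)) : ℝ) / ((F n).card : ℝ))
      atTop (𝓝 c))
    (δ ε : ℝ) (hδ : 0 < δ) (hε0 : 0 < ε) (hε1 : ε < 1) :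
    ∃ (L : ℕ) (δ' : ℝ), 0 < δ' ∧ ∀ Y : Finset G, Y.Nonempty →
      ((1 - δ') * (Y.card : ℝ) < ((winter S L Y).card : ℝ)) →
      (Module.finrank ℂ (VSpace A Y) : ℝ) / (Y.card : ℝ) ≤ (1 - ε)⁻¹ * (c + δ) + ε := by
  classical
  obtain ⟨F₀, hF₀, h_dim⟩ := exists_finrank_VSpace_add_lt hS.1 A w hF hc hδ
  obtain ⟨k, hk⟩ := exists_subset_wball hS F₀
  set δ' := ε / (d * #F₀ + 1)
  refine ⟨k + k, δ', by positivity, fun Y hY hΩ => ?_⟩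
  have h_t : (#(Y \ winter S (k + k) Y) : ℝ) ≤ δ' * #Y := by
    rw [card_sdiff_of_subset (winter_subset _ _), Nat.cast_sub (card_le_card (winter_subset _ _))]
    linarith
  have h_δ' : d * #F₀ * δ' ≤ ε := by
    rw [mul_div_assoc', div_le_iff₀ (by positivity)]
    nlinarith
  have h_cδ : 0 < c + δ := pos_of_mul_pos_left (h_dim.trans_le' (by positivity)) (by positivity)
  have h_inv : 1 ≤ (1 - ε)⁻¹ := one_le_inv₀ (by linarith) |>.2 (by linarith)
  rw [div_le_iff₀ (by exact_mod_cast hY.card_pos)]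
  calc (finrank ℂ (VSpace A Y) : ℝ) ≤ (c + δ + d * #F₀ * δ') * #Y :=
        finrank_VSpace_le hS.1 hA hF₀ hk h_dim.le h_t
    _ ≤ ((1 - ε)⁻¹ * (c + δ) + ε) * #Y := by
        gcongr
        linarith [le_mul_of_one_le_left h_cδ.le h_inv]
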